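/- arXiv:1309.2145 — 7 statements merged into one kernel-verified Lean document; each statement's English description precedes it below -/
import Mathlib

section
/- There exists a family (E_i)_{i<ω₁} of infinite subsets of ℕ, indexed by the first uncountable ordinal, such that (1) E_i ∩ E_j is finite whenever i ≠ j, and (2) for every i < ω₁ and every m ∈ ℕ, the set {j < i : E_j ∩ E_i ⊆ {0,1,...,m-1}} is finite. -/
open Cardinal Ordinal

/-!
The sets `E i` are built by transfinite recursion. At stage `i`, the earlier sets together with
the slices `{x | x.unpair.1 = n}` of `ℕ` form a countably infinite almost disjoint family
`A 0, A 1, …` of infinite sets (the slices keep it infinite at finite stages). Diagonalizing,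
pick `k 0 < k 1 < ⋯` with `k n ∈ A n \ (A 0 ∪ ⋯ ∪ A (n-1))` and put `E i = {k n | n ∈ ℕ}`.
Then `E i ∩ A n ⊆ {k 0, …, k n}` is finite, and `E i ∩ A n` contains `k n ≥ n`, so
`E i ∩ A n ⊆ {0, …, m-1}` only for `n < m`.
-/

open Set

def IsLuzinExtension {κ : Type*} (A : κ → Set ℕ) (E : Set ℕ) : Prop :=
  E.Infinite ∧ (∀ a, (E ∩ A a).Finite) ∧ ∀ m, {a | E ∩ A a ⊆ Iio m}.Finite

theorem exists_strictMono_forall_mem (S : ℕ → Set ℕ) (hS : ∀ n, (S n).Infinite) :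
    ∃ k : ℕ → ℕ, StrictMono k ∧ ∀ n, k n ∈ S n := by
  choose next hnext_mem hnext_gt using fun n b => (hS n).exists_gt b
  let k : ℕ → ℕ := fun n => Nat.rec (next 0 0) (fun n kn => next (n + 1) kn) n
  refine ⟨k, strictMono_nat_of_lt_succ fun n => hnext_gt (n + 1) (k n), fun n => ?_⟩
  cases n with
  | zero => exact hnext_mem 0 0
  | succ n => exact hnext_mem (n + 1) (k n)

theorem infinite_diff_biUnion_Iio {A : ℕ → Set ℕ} (hA : ∀ n, (A n).Infinite)
    (hAD : Pairwise fun m n => (A m ∩ A n).Finite) (n : ℕ) :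
    (A n \ ⋃ j ∈ Iio n, A j).Infinite := by
  have hfin : (A n ∩ ⋃ j ∈ Iio n, A j).Finite := by
    rw [inter_iUnion₂]
    exact (finite_Iio n).biUnion fun j hj => hAD (ne_of_gt hj)
  simpa only [sdiff_self_inter] using (hA n).sdiff hfin

theorem exists_isLuzinExtension_nat (A : ℕ → Set ℕ) (hA : ∀ n, (A n).Infinite)
    (hAD : Pairwise fun m n => (A m ∩ A n).Finite) : ∃ E, IsLuzinExtension A E := by
  obtain ⟨k, hk_mono, hk_mem⟩ :=
    exists_strictMono_forall_mem _ (infinite_diff_biUnion_Iio hA hAD)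
  refine ⟨range k, infinite_range_of_injective hk_mono.injective, fun n => ?_, fun m => ?_⟩
  · have hsub : range k ∩ A n ⊆ k '' Iic n := by
      rintro _ ⟨⟨l, rfl⟩, hl⟩
      refine ⟨l, mem_Iic.2 <| not_lt.1 fun hnl => (hk_mem l).2 ?_, rfl⟩
      exact mem_biUnion hnl hl
    exact ((finite_Iic n).image k).subset hsub
  · refine (finite_Iio m).subset fun n hn => ?_
    have hkn_lt : k n < m := hn ⟨mem_range_self n, (hk_mem n).1⟩
    exact lt_of_le_of_lt hk_mono.le_apply hkn_lt

theorem exists_isLuzinExtension {κ : Type*} [Countable κ] [Infinite κ] (A : κ → Set ℕ)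
    (hA : ∀ a, (A a).Infinite) (hAD : Pairwise fun a b => (A a ∩ A b).Finite) :
    ∃ E, IsLuzinExtension A E := by
  obtain ⟨e⟩ := nonempty_equiv_of_countable (α := ℕ) (β := κ)
  obtain ⟨E, hinf, hfin, hlate⟩ :=
    exists_isLuzinExtension_nat (A ∘ e) (fun n => hA (e n)) (hAD.comp_of_injective e.injective)
  refine ⟨E, hinf, e.forall_congr_right.1 hfin, fun m => ?_⟩
  convert (hlate m).image e using 1
  rw [e.image_eq_preimage_symm]
  ext a
  simp

theorem pairwise_finite_inter_of_lt {α : Type*} [LinearOrder α] {E : α → Set ℕ}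
    (h : ∀ ⦃i j⦄, j < i → (E i ∩ E j).Finite) : Pairwise fun i j => (E i ∩ E j).Finite := by
  intro i j hij
  rcases hij.lt_or_gt with hlt | hgt
  · rw [inter_comm]
    exact h hlt
  · exact h hgt

def natSlice (n : ℕ) : Set ℕ := (fun x => x.unpair.1) ⁻¹' {n}

theorem natSlice_infinite (n : ℕ) : (natSlice n).Infinite :=
  infinite_of_injective_forall_mem (fun _ _ h => (Nat.pair_eq_pair.1 h).2)
    fun k => show (Nat.pair n k).unpair.1 = n by simp

theorem pairwise_disjoint_natSlice : Pairwise fun m n => Disjoint (natSlice m) (natSlice n) :=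
  pairwise_disjoint_fiber _

section Construction

variable {ι : Type*} [LinearOrder ι] [WellFoundedLT ι]

noncomputable def luzinFamily : ι → Set ℕ :=
  wellFounded_lt.fix fun i E =>
    Classical.epsilon (IsLuzinExtension (Sum.elim natSlice fun j : Iio i => E j j.2))

def luzinStage (i : ι) : ℕ ⊕ Iio i → Set ℕ :=
  Sum.elim natSlice fun j => luzinFamily j.1

theorem luzinFamily_eq (i : ι) :
    luzinFamily i = Classical.epsilon (IsLuzinExtension (luzinStage i)) :=
  wellFounded_lt.fix_eq _ i

theorem pairwise_finite_inter_luzinStage {i : ι}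
    (ih : ∀ j < i, IsLuzinExtension (luzinStage j) (luzinFamily j)) :
    Pairwise fun a b => (luzinStage i a ∩ luzinStage i b).Finite := by
  have earlier : Pairwise fun j k : Iio i => (luzinFamily j.1 ∩ luzinFamily k.1).Finite :=
    pairwise_finite_inter_of_lt fun j k hkj => (ih j j.2).2.1 (.inr ⟨k, hkj⟩)
  rintro (m | j) (n | k) hne
  · simp [luzinStage, (pairwise_disjoint_natSlice (ne_of_apply_ne Sum.inl hne)).inter_eq]
  · rw [luzinStage, inter_comm]
    exact (ih k k.2).2.1 (.inl m)
  · exact (ih j j.2).2.1 (.inl n)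
  · exact earlier (ne_of_apply_ne Sum.inr hne)

theorem isLuzinExtension_luzinFamily (hι : ∀ i : ι, (Iio i).Countable) (i : ι) :
    IsLuzinExtension (luzinStage i) (luzinFamily i) := by
  induction i using WellFoundedLT.induction with
  | _ i ih =>
    have : Countable (Iio i) := (hι i).to_subtype
    rw [luzinFamily_eq]
    refine Classical.epsilon_spec <|
      exists_isLuzinExtension _ ?_ (pairwise_finite_inter_luzinStage ih)
    rintro (n | j)
    · exact natSlice_infinite n
    · exact (ih j j.2).1

end Construction

theorem exists_luzin_family {ι : Type*} [LinearOrder ι] [WellFoundedLT ι]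
    (hι : ∀ i : ι, (Iio i).Countable) :
    ∃ E : ι → Set ℕ, (∀ i, (E i).Infinite) ∧ (Pairwise fun i j => (E i ∩ E j).Finite) ∧
      ∀ i m, {j | j < i ∧ E j ∩ E i ⊆ Iio m}.Finite := by
  have hE := isLuzinExtension_luzinFamily hι
  refine ⟨luzinFamily, fun i => (hE i).1,
    pairwise_finite_inter_of_lt fun i j hji => (hE i).2.1 (.inr ⟨j, hji⟩), fun i m => ?_⟩
  refine (((hE i).2.2 m).preimage Sum.inr_injective.injOn).image Subtype.val |>.subset ?_
  rintro j ⟨hji, hsub⟩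
  exact ⟨⟨j, hji⟩, (inter_comm _ _).subset.trans hsub, rfl⟩

theorem Ordinal.countable_Iio_of_lt_ord_aleph_one {o : Ordinal} (ho : o < (ℵ₁).ord) :
    (Iio o).Countable := by
  rw [← le_aleph0_iff_set_countable, Cardinal.mk_Iio_ordinal, lift_le_aleph0, ← lt_aleph_one_iff,
    ← lt_ord]
  exact ho

/-- Luzin's construction: a family `(E i)` of infinite subsets of `ℕ` indexed by the
ordinals below `ω₁` which is almost disjoint and such that for every `i` and `m`,
only finitely many `j < i` satisfy `E j ∩ E i ⊆ {0, …, m-1}`. -/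
theorem luzin_family_exists :
    ∃ E : {i : Ordinal // i < (Cardinal.aleph 1).ord} → Set ℕ,
      (∀ i, (E i).Infinite) ∧
      (∀ i j, i ≠ j → (E i ∩ E j).Finite) ∧
      (∀ i : {i : Ordinal // i < (Cardinal.aleph 1).ord}, ∀ m : ℕ,
        {j | j < i ∧ E j ∩ E i ⊆ Set.Iio m}.Finite) :=
  exists_luzin_family fun i =>
    (Ordinal.countable_Iio_of_lt_ord_aleph_one i.2).preimage Subtype.val_injective
end

section
/- Let (E_i)_{i<ω₁} be a family of infinite subsets of ℕ such that E_i ∩ E_j is finite for i ≠ j and such that for every i and every m, the set {j < i : E_j ∩ E_i ⊆ {0,...,m-1}} is finite (a Luzin family). Then for every X ⊆ ω₁ with both X and ω₁ \ X uncountable, there is no F ⊆ ℕ such that E_i \ F is finite for all i ∈ X and E_i ∩ F is finite for all i ∈ ω₁ \ X. -/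
/-!
Suppose `F` separates `X` from its complement. For `i ∈ X` the set `E i \ F` is bounded by some
`a i`, and for `i ∉ X` the set `E i ∩ F` is bounded by some `b i`. By pigeonhole there are
uncountable `X' ⊆ X` and `Y' ⊆ Xᶜ` on which `a` and `b` are constant, so `E j ∩ E i` is bounded
by one `m` for all `i ∈ X'`, `j ∈ Y'`. Since `X'` is unbounded in `ω₁`, some `i ∈ X'` lies above
infinitely many `j ∈ Y'`, contradicting the Luzin property of `E i` at `m`.
-/

open Cardinal Ordinal

local notation "Ω₁" => {i : Ordinal // i < Cardinal.ord (Cardinal.aleph 1)}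

theorem Set.exists_not_countable_inter_preimage_singleton {α β : Type*} [Countable β]
    {s : Set α} (hs : ¬ s.Countable) (f : α → β) : ∃ b, ¬ (s ∩ f ⁻¹' {b}).Countable := by
  by_contra! h
  refine hs <| (Set.countable_iUnion h).mono fun x hx => ?_
  exact Set.mem_iUnion.mpr ⟨f x, hx, rfl⟩

theorem Set.inter_subset_Iic_max_of_separated {α : Type*} [LinearOrder α] {A B F : Set α}
    {a b : α} (hA : A \ F ⊆ Set.Iic a) (hB : B ∩ F ⊆ Set.Iic b) :
    B ∩ A ⊆ Set.Iic (max a b) := by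
  rintro x ⟨hxB, hxA⟩
  by_cases hxF : x ∈ F
  · exact le_max_of_le_right (hB ⟨hxB, hxF⟩)
  · exact le_max_of_le_left (hA ⟨hxA, hxF⟩)

theorem countable_Iic_omega_one (j : Ω₁) : (Set.Iic j).Countable := by
  suffices (Set.Iic j.1).Countable from this.preimage Subtype.val_injective
  have hIio : (Set.Iio j.1).Countable := by
    rw [← le_aleph0_iff_set_countable, Cardinal.mk_Iio_ordinal, lift_le_aleph0]
    exact lt_aleph_one_iff.mp (lt_ord.mp j.2)
  rw [← Set.Iio_insert]
  exact hIio.insert j.1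

theorem exists_mem_forall_lt_of_countable {s t : Set Ω₁} (hs : s.Countable)
    (ht : ¬ t.Countable) : ∃ i ∈ t, ∀ j ∈ s, j < i := by
  by_contra! h
  refine ht <| (hs.biUnion fun j _ => countable_Iic_omega_one j).mono fun i hi => ?_
  obtain ⟨j, hj, hij⟩ := h i hi
  exact Set.mem_biUnion hj hij

theorem luzin_family_not_separated_general
    (E : {i : Ordinal // i < (Cardinal.aleph 1).ord} → Set ℕ)
    (hluzin : ∀ i : {i : Ordinal // i < (Cardinal.aleph 1).ord}, ∀ m : ℕ,
      {j | j < i ∧ E j ∩ E i ⊆ Set.Iio m}.Finite)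
    (X : Set {i : Ordinal // i < (Cardinal.aleph 1).ord})
    (hX : ¬ X.Countable) (hXc : ¬ (Xᶜ).Countable) :
    ¬ ∃ F : Set ℕ,
        (∀ i ∈ X, (E i \ F).Finite) ∧ (∀ i ∈ Xᶜ, (E i ∩ F).Finite) := by
  rintro ⟨F, hXF, hXcF⟩
  choose! a ha using fun i hi => (hXF i hi).bddAbove
  choose! b hb using fun i hi => (hXcF i hi).bddAbove
  obtain ⟨m, hm⟩ := Set.exists_not_countable_inter_preimage_singleton hX a
  obtain ⟨n, hn⟩ := Set.exists_not_countable_inter_preimage_singleton hXc b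
  obtain ⟨S, hSY, hS, hSinf⟩ :=
    Set.Infinite.exists_subset_countable_infinite fun h : Set.Finite _ => hn h.countable
  obtain ⟨i, ⟨hiX, rfl⟩, hSi⟩ := exists_mem_forall_lt_of_countable hS hm
  refine (hluzin i (max (a i) n + 1)).not_infinite (hSinf.mono fun j hj => ⟨hSi j hj, ?_⟩)
  obtain ⟨hjX, hjn⟩ := hSY hj
  exact (Set.inter_subset_Iic_max_of_separated (ha i hiX) (hjn ▸ hb j hjX)).trans
    (Set.Iic_subset_Iio.mpr (lt_add_one _))

/-- A Luzin family cannot be separated along any uncountable partition: if `X` and its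
complement are both uncountable, there is no `F ⊆ ℕ` with `E i \ F` finite for `i ∈ X`
and `E i ∩ F` finite for `i ∉ X`. -/
theorem luzin_family_not_separated
    (E : {i : Ordinal // i < (Cardinal.aleph 1).ord} → Set ℕ)
    (hinf : ∀ i, (E i).Infinite)
    (had : ∀ i j, i ≠ j → (E i ∩ E j).Finite)
    (hluzin : ∀ i : {i : Ordinal // i < (Cardinal.aleph 1).ord}, ∀ m : ℕ,
      {j | j < i ∧ E j ∩ E i ⊆ Set.Iio m}.Finite)
    (X : Set {i : Ordinal // i < (Cardinal.aleph 1).ord})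
    (hX : ¬ X.Countable) (hXc : ¬ (Xᶜ).Countable) :
    ¬ ∃ F : Set ℕ,
        (∀ i ∈ X, (E i \ F).Finite) ∧ (∀ i ∈ Xᶜ, (E i ∩ F).Finite) :=
  luzin_family_not_separated_general E hluzin X hX hXc
end

section
/- Let s⁰ = [[1,0],[0,-1]] and s¹ = [[1,0],[1,-1]] in M₂(ℂ). There is no invertible matrix v ∈ M₂(ℂ) such that both v s⁰ v⁻¹ and v s¹ v⁻¹ are unitary. -/
/-!
The product of the two conjugates is unitary and conjugate to `s⁰ s¹ = !![1, 0; -1, 1]`, so its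
trace is `2`, the dimension. A unitary `U` whose trace equals the dimension `n` is the identity,
because `tr ((U - 1)ᴴ (U - 1)) = 2 n - tr U - star (tr U) = 0`. Hence `s⁰ s¹ = 1`, which is false.
-/

namespace Matrix

variable {n R : Type*} [Fintype n] [DecidableEq n] [CommRing R]

theorem eq_one_of_mem_unitaryGroup_of_trace_eq_card [PartialOrder R] [StarRing R]
    [StarOrderedRing R] [NoZeroDivisors R] {U : Matrix n n R} (hU : U ∈ unitaryGroup n R)
    (htr : U.trace = Fintype.card n) : U = 1 := by
  have hzero : ((U - 1)ᴴ * (U - 1)).trace = 0 := by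
    have hUU : Uᴴ * U = 1 := hU.1
    simp only [conjTranspose_sub, conjTranspose_one, sub_mul, mul_sub, hUU, mul_one, one_mul,
      trace_sub, trace_one, trace_conjTranspose, htr, star_natCast]
    abel
  exact sub_eq_zero.mp (trace_conjTranspose_mul_self_eq_zero_iff.mp hzero)

variable {v : Matrix n n R}

theorem conj_mul_conj (hv : IsUnit v) (A B : Matrix n n R) :
    v * A * v⁻¹ * (v * B * v⁻¹) = v * (A * B) * v⁻¹ := by
  simp only [Matrix.mul_assoc, nonsing_inv_mul_cancel_left _ _ ((isUnit_iff_isUnit_det v).mp hv)]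

theorem conj_eq_one_iff (hv : IsUnit v) {A : Matrix n n R} : v * A * v⁻¹ = 1 ↔ A = 1 := by
  have hdet := (isUnit_iff_isUnit_det v).mp hv
  refine ⟨fun h => ?_, fun h => by rw [h, Matrix.mul_one, mul_nonsing_inv _ hdet]⟩
  calc A = v⁻¹ * (v * A * v⁻¹) * v := by
        simp only [Matrix.mul_assoc, nonsing_inv_mul_cancel_left _ _ hdet, nonsing_inv_mul _ hdet,
          Matrix.mul_one]
    _ = 1 := by rw [h, Matrix.mul_one, nonsing_inv_mul _ hdet]

end Matrix

open scoped ComplexOrder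

/-- The involutions `s⁰ = [[1,0],[0,-1]]` and `s¹ = [[1,0],[1,-1]]` in `M₂(ℂ)` are not
simultaneously unitarizable. -/
theorem not_simultaneously_unitarizable :
    ¬ ∃ v : Matrix (Fin 2) (Fin 2) ℂ, IsUnit v ∧
        v * !![1, 0; 0, -1] * v⁻¹ ∈ Matrix.unitaryGroup (Fin 2) ℂ ∧
        v * !![1, 0; 1, -1] * v⁻¹ ∈ Matrix.unitaryGroup (Fin 2) ℂ := by
  rintro ⟨v, hv, h₀, h₁⟩
  have hprod : !![(1 : ℂ), 0; 0, -1] * !![1, 0; 1, -1] = !![1, 0; -1, 1] := by simp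
  have hunitary := mul_mem h₀ h₁
  rw [Matrix.conj_mul_conj hv, hprod] at hunitary
  have htrace : (v * !![(1 : ℂ), 0; -1, 1] * v⁻¹).trace = Fintype.card (Fin 2) := by
    rw [Matrix.trace_conj hv, Matrix.trace_fin_two_of]
    norm_num
  have hone := Matrix.eq_one_of_mem_unitaryGroup_of_trace_eq_card hunitary htrace
  rw [Matrix.conj_eq_one_iff hv] at hone
  simpa using congrFun (congrFun hone 1) 0
end

section
/- Let s⁰ = [[1,0],[0,-1]] and s¹ = [[1,0],[1,-1]] in M₂(ℂ), and let 𝒰 denote the unitary group of M₂(ℂ). For every C > 0, the infimum ε(C) := inf { d(v s⁰ v⁻¹, 𝒰) + d(v s¹ v⁻¹, 𝒰) : v invertible in M₂(ℂ), ‖v‖·‖v⁻¹‖ ≤ C } is strictly positive. -/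
/-!
The product s⁰s¹ is the unipotent matrix [[1,0],[-1,1]], whose n-th power has an entry of
modulus n. Since unitaries have norm one, ‖x‖ ≤ exp d(x, 𝒰); so if `a = v s⁰ v⁻¹` and
`b = v s¹ v⁻¹` lie at total distance `s` from `𝒰`, then `‖ab‖ ≤ exp s`, and conjugating back
gives `n ≤ ‖v‖ ‖v⁻¹‖ ‖ab‖ⁿ ≤ C exp (n s)`. Taking any integer `n > C` yields
`s ≥ log (n / C) / n > 0`.
-/

open scoped Matrix.Norms.L2Operator
open Matrix Metric

theorem norm_le_exp_infDist_unitary {E : Type*} [NormedRing E] [StarRing E] [CStarRing E]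
    [Nontrivial E] (x : E) : ‖x‖ ≤ Real.exp (infDist x (unitary E)) := by
  have hne : (unitary E : Set E).Nonempty := ⟨1, one_mem _⟩
  have h : ‖x‖ - 1 ≤ infDist x (unitary E) := by
    refine (le_infDist hne).2 fun u hu => ?_
    rw [dist_eq_norm, ← CStarRing.norm_of_mem_unitary hu]
    exact norm_sub_norm_le x u
  linarith [Real.add_one_le_exp (infDist x (unitary E))]

theorem norm_pow_le_of_conj {A : Type*} [NormedRing A] (u : Aˣ) (x : A) {n : ℕ} (hn : 0 < n) :
    ‖x ^ n‖ ≤ ‖(u : A)‖ * ‖(↑u⁻¹ : A)‖ * ‖(u : A) * x * ↑u⁻¹‖ ^ n := by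
  have hx : x ^ n = ↑u⁻¹ * ((u : A) * x * ↑u⁻¹) ^ n * u := by
    rw [Units.conj_pow]; simp [mul_assoc]
  calc ‖x ^ n‖ ≤ ‖(↑u⁻¹ : A)‖ * ‖((u : A) * x * ↑u⁻¹) ^ n‖ * ‖(u : A)‖ := by
        rw [hx]; exact norm_mul₃_le
    _ ≤ ‖(↑u⁻¹ : A)‖ * ‖(u : A) * x * ↑u⁻¹‖ ^ n * ‖(u : A)‖ := by
        gcongr; exact norm_pow_le' _ hn
    _ = _ := by ring

theorem Matrix.norm_apply_le_l2_opNorm {m n 𝕜 : Type*} [Fintype m] [Fintype n] [DecidableEq n]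
    [RCLike 𝕜] (A : Matrix m n 𝕜) (i : m) (j : n) : ‖A i j‖ ≤ ‖A‖ := by
  calc ‖A i j‖ = ‖(EuclideanSpace.equiv m 𝕜).symm (A *ᵥ EuclideanSpace.single j 1) i‖ := by simp
    _ ≤ ‖(EuclideanSpace.equiv m 𝕜).symm (A *ᵥ EuclideanSpace.single j 1)‖ :=
        PiLp.norm_apply_le _ i
    _ ≤ ‖A‖ * ‖EuclideanSpace.single j (1 : 𝕜)‖ := A.l2_opNorm_mulVec _
    _ = ‖A‖ := by simp

theorem Matrix.lower_unipotent_fin_two_pow {R : Type*} [CommRing R] (c : R) (k : ℕ) :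
    !![1, 0; c, 1] ^ k = !![1, 0; k * c, 1] := by
  induction k with
  | zero => simp [one_fin_two]
  | succ k ih => rw [pow_succ, ih, mul_fin_two]; push_cast; ring_nf

local notation "M₂" => Matrix (Fin 2) (Fin 2) ℂ

/-- For every `C > 0`, the infimum `ε(C)` of
`d(v s⁰ v⁻¹, 𝒰) + d(v s¹ v⁻¹, 𝒰)` over invertible `v` with `‖v‖·‖v⁻¹‖ ≤ C` is
strictly positive (equivalently, some `ε > 0` is a lower bound). -/
theorem eps_of_C_pos (C : ℝ) (hC : 0 < C) :
    ∃ ε > (0 : ℝ), ∀ v : Matrix (Fin 2) (Fin 2) ℂ, IsUnit v → ‖v‖ * ‖v⁻¹‖ ≤ C →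
      ε ≤ Metric.infDist (v * !![1, 0; 0, -1] * v⁻¹)
            ((Matrix.unitaryGroup (Fin 2) ℂ : Set (Matrix (Fin 2) (Fin 2) ℂ))) +
          Metric.infDist (v * !![1, 0; 1, -1] * v⁻¹)
            ((Matrix.unitaryGroup (Fin 2) ℂ : Set (Matrix (Fin 2) (Fin 2) ℂ))) := by
  set n : ℕ := ⌈C⌉₊ + 1
  have hCn : C < n := by push_cast [n]; linarith [Nat.le_ceil C]
  refine ⟨Real.log (n / C) / n, div_pos (Real.log_pos ((one_lt_div hC).2 hCn)) (by positivity), ?_⟩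
  rintro _ ⟨v, rfl⟩ hκ
  rw [← coe_units_inv] at hκ ⊢
  set a : M₂ := (v : M₂) * !![1, 0; 0, -1] * ((v⁻¹ : M₂ˣ) : M₂)
  set b : M₂ := (v : M₂) * !![1, 0; 1, -1] * ((v⁻¹ : M₂ˣ) : M₂)
  set d : M₂ → ℝ := fun x => infDist x (unitary M₂)
  have hab : a * b = (v : M₂) * !![1, 0; -1, 1] * ((v⁻¹ : M₂ˣ) : M₂) := by
    have hs : (!![1, 0; 0, -1] : M₂) * !![1, 0; 1, -1] = !![1, 0; -1, 1] := by simp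
    simp only [a, b, ← hs, mul_assoc, Units.inv_mul_cancel_left]
  have key : (n : ℝ) ≤ C * Real.exp (n * (d a + d b)) :=
    calc (n : ℝ) = ‖(!![1, 0; -1, 1] ^ n : M₂) 1 0‖ := by simp [lower_unipotent_fin_two_pow]
      _ ≤ ‖(!![1, 0; -1, 1] ^ n : M₂)‖ := norm_apply_le_l2_opNorm _ 1 0
      _ ≤ ‖(v : M₂)‖ * ‖((v⁻¹ : M₂ˣ) : M₂)‖ * ‖a * b‖ ^ n := by
          rw [hab]; exact norm_pow_le_of_conj v _ (Nat.succ_pos _)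
      _ ≤ C * (Real.exp (d a) * Real.exp (d b)) ^ n := by
          gcongr
          exact (norm_mul_le a b).trans (by gcongr <;> exact norm_le_exp_infDist_unitary _)
      _ = C * Real.exp (n * (d a + d b)) := by rw [← Real.exp_add, ← Real.exp_nat_mul]
  rw [div_le_iff₀ (by positivity), Real.log_le_iff_le_exp (by positivity), div_le_iff₀ hC]
  simpa only [mul_comm] using key
end

section
/- Let G be a bounded subgroup of GL(n,ℂ), i.e., sup{‖g‖ : g ∈ G} =: C < ∞. Then there exists an invertible matrix v ∈ GL(n,ℂ) with ‖v‖·‖v⁻¹‖ ≤ C² such that v g v⁻¹ is unitary for every g ∈ G. -/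
/-!
Averaging `g ↦ g* g` over the compact closure of `G` against Haar measure gives a positive
element `h` with `g* h g = h` for every `g ∈ G` and `1 ≤ C² h ≤ C⁴`. Its square root `v`
satisfies `v* v = h`, which makes every `v g v⁻¹` unitary, and the two order bounds on `h`
become `‖v‖ ≤ C` and `‖v⁻¹‖ ≤ C`. Everything except the compactness of the closure, which
needs finite dimension, works in an arbitrary unital C⋆-algebra.
-/

open MeasureTheory

lemma Units.isCompact_setOf_norm_le {R : Type*} [NormedRing R] [ProperSpace R] (c : ℝ) :
    IsCompact {u : Rˣ | ‖(u : R)‖ ≤ c ∧ ‖(↑u⁻¹ : R)‖ ≤ c} := by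
  have hball : IsCompact (Metric.closedBall (0 : R) c ×ˢ
      (MulOpposite.unop ⁻¹' Metric.closedBall (0 : R) c)) :=
    (isCompact_closedBall 0 c).prod
      (MulOpposite.opHomeomorph.symm.isCompact_preimage.mpr (isCompact_closedBall 0 c))
  convert Units.isClosedEmbedding_embedProduct.isCompact_preimage hball using 1
  ext u
  simp [Units.embedProduct]

lemma Units.conj_mem_unitary {R : Type*} [Monoid R] [StarMul R] {v g : Rˣ} {h : R}
    (hv : star (v : R) * v = h) (hg : star (g : R) * h * g = h) :
    ((v * g * v⁻¹ : Rˣ) : R) ∈ unitary R := by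
  refine (v * g * v⁻¹).isUnit.mem_unitary_of_star_mul_self ?_
  calc star ((v * g * v⁻¹ : Rˣ) : R) * (v * g * v⁻¹ : Rˣ)
      = star (↑v⁻¹ : R) * (star (g : R) * (star (v : R) * v) * g) * ↑v⁻¹ := by
        simp only [Units.val_mul, star_mul, mul_assoc]
    _ = star (↑v⁻¹ : R) * (star (v : R) * v) * ↑v⁻¹ := by rw [hv, hg]
    _ = 1 := by
        rw [← mul_assoc, ← star_mul, Units.mul_inv, Units.mul_inv_cancel_right, star_one]

variable {A : Type*} [CStarAlgebra A]

section Order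

variable [PartialOrder A] [StarOrderedRing A]

lemma star_mul_self_le_algebraMap_iff_norm_le {a : A} {c : ℝ} (hc : 0 ≤ c) :
    star a * a ≤ algebraMap ℝ A (c ^ 2) ↔ ‖a‖ ≤ c := by
  rw [← CStarAlgebra.norm_le_iff_le_algebraMap _ (by positivity), CStarRing.norm_star_mul_self,
    ← sq, sq_le_sq₀ (norm_nonneg a) hc]

lemma Units.one_le_smul_star_mul_self_iff {u : Aˣ} {c : ℝ} (hc : 0 ≤ c) :
    1 ≤ c ^ 2 • (star (u : A) * u) ↔ ‖(↑u⁻¹ : A)‖ ≤ c := by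
  rw [← star_mul_self_le_algebraMap_iff_norm_le hc, Algebra.algebraMap_eq_smul_one]
  constructor
  · intro h
    simpa [← mul_assoc, ← star_mul] using star_left_conjugate_le_conjugate h (↑u⁻¹ : A)
  · intro h
    simpa [← mul_assoc, mul_assoc (star (u : A)), ← star_mul] using
      star_left_conjugate_le_conjugate h (u : A)

lemma isUnit_of_one_le_smul {a : A} {r : ℝ} (h : 1 ≤ r • a) : IsUnit a := by
  have := (isStrictlyPositive_one.of_le h).isUnit
  rw [Algebra.smul_def] at this
  exact ((Algebra.commute_algebraMap_left r a).isUnit_mul_iff.mp this).2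

theorem exists_unit_conj_mem_unitary_of_le {S : Set Aˣ} {h : A} {c : ℝ} (hc : 0 ≤ c)
    (h0 : 0 ≤ h) (hle : h ≤ algebraMap ℝ A (c ^ 2)) (hge : 1 ≤ c ^ 2 • h)
    (hS : ∀ g ∈ S, star (g : A) * h * g = h) :
    ∃ v : Aˣ, ‖(v : A)‖ ≤ c ∧ ‖(↑v⁻¹ : A)‖ ≤ c ∧
      ∀ g ∈ S, ((v * g * v⁻¹ : Aˣ) : A) ∈ unitary A := by
  obtain ⟨v, hv⟩ := (CFC.isUnit_sqrt_iff h).mpr (isUnit_of_one_le_smul hge)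
  have hvv : star (v : A) * v = h := by
    rw [hv, (IsSelfAdjoint.of_nonneg (CFC.sqrt_nonneg h)).star_eq, CFC.sqrt_mul_sqrt_self h]
  exact ⟨v, (star_mul_self_le_algebraMap_iff_norm_le hc).mp (hvv ▸ hle),
    (v.one_le_smul_star_mul_self_iff hc).mp (hvv ▸ hge),
    fun g hg => v.conj_mem_unitary hvv (hS g hg)⟩

end Order

namespace MonoidHom

variable {K : Type*} [Group K] [MeasurableSpace K]

noncomputable def gramAverage (μ : Measure K) (ρ : K →* Aˣ) : A :=
  ∫ k, star (ρ k : A) * ρ k ∂μ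

variable {μ : Measure K} {ρ : K →* Aˣ}

lemma gramAverage_nonneg [PartialOrder A] [StarOrderedRing A] : 0 ≤ ρ.gramAverage μ :=
  integral_nonneg fun _ => star_mul_self_nonneg _

variable [TopologicalSpace K] [OpensMeasurableSpace K] [CompactSpace K]

lemma integrable_star_mul_self [IsFiniteMeasure μ] (hρ : Continuous ρ) :
    Integrable (fun k => star (ρ k : A) * ρ k) μ := by
  have : Continuous fun k => (ρ k : A) := Units.continuous_val.comp hρ
  exact (this.star.mul this).integrable_of_hasCompactSupport (.of_compactSpace _)

lemma star_mul_gramAverage_mul [IsFiniteMeasure μ] [MeasurableMul K] [μ.IsMulRightInvariant]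
    (hρ : Continuous ρ) (g : K) :
    star (ρ g : A) * ρ.gramAverage μ * ρ g = ρ.gramAverage μ := by
  calc star (ρ g : A) * ρ.gramAverage μ * ρ g
      = ∫ k, star (ρ (k * g) : A) * ρ (k * g) ∂μ := by
        rw [gramAverage, ← ContinuousLinearMap.mulLeftRight_apply ℝ,
          ← ContinuousLinearMap.integral_comp_comm _ (integrable_star_mul_self hρ)]
        simp [mul_assoc]
    _ = ρ.gramAverage μ := integral_mul_right_eq_self (fun k => star (ρ k : A) * ρ k) g

variable [PartialOrder A] [StarOrderedRing A] [IsProbabilityMeasure μ]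

lemma gramAverage_le (hρ : Continuous ρ) {c : ℝ} (hc : ∀ k, ‖(ρ k : A)‖ ≤ c) :
    ρ.gramAverage μ ≤ algebraMap ℝ A (c ^ 2) :=
  calc ρ.gramAverage μ ≤ ∫ _, algebraMap ℝ A (c ^ 2) ∂μ :=
        integral_mono (integrable_star_mul_self hρ) (integrable_const _) fun k =>
          (star_mul_self_le_algebraMap_iff_norm_le ((norm_nonneg _).trans (hc 1))).mpr (hc k)
    _ = algebraMap ℝ A (c ^ 2) := by simp

lemma one_le_smul_gramAverage (hρ : Continuous ρ) {c : ℝ} (hc : ∀ k, ‖(ρ k : A)‖ ≤ c) :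
    1 ≤ c ^ 2 • ρ.gramAverage μ :=
  calc (1 : A) = ∫ _, (1 : A) ∂μ := by simp
    _ ≤ ∫ k, c ^ 2 • (star (ρ k : A) * ρ k) ∂μ :=
        integral_mono (integrable_const _) ((integrable_star_mul_self hρ).smul _) fun k =>
          ((ρ k).one_le_smul_star_mul_self_iff ((norm_nonneg _).trans (hc 1))).mpr
            (by simpa using hc k⁻¹)
    _ = c ^ 2 • ρ.gramAverage μ := integral_smul _ _

end MonoidHom

theorem MonoidHom.exists_conj_mem_unitary_of_compactSpace {K : Type*} [Group K]
    [TopologicalSpace K] [IsTopologicalGroup K] [CompactSpace K] (ρ : K →* Aˣ)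
    (hρ : Continuous ρ) {c : ℝ} (hc : ∀ k, ‖(ρ k : A)‖ ≤ c) :
    ∃ v : Aˣ, ‖(v : A)‖ ≤ c ∧ ‖(↑v⁻¹ : A)‖ ≤ c ∧
      ∀ k, ((v * ρ k * v⁻¹ : Aˣ) : A) ∈ unitary A := by
  let := CStarAlgebra.spectralOrder A
  have := CStarAlgebra.spectralOrderedRing A
  borelize K
  -- the inverse of a left Haar measure is right invariant
  let μ : Measure K := (Measure.haarMeasure ⊤).inv
  have : IsProbabilityMeasure μ :=
    ⟨by rw [Measure.inv_apply, Set.inv_univ]; exact Measure.haarMeasure_self⟩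
  obtain ⟨v, hv, hv_inv, hv_conj⟩ := exists_unit_conj_mem_unitary_of_le (S := Set.range ρ)
    ((norm_nonneg _).trans (hc 1)) gramAverage_nonneg (gramAverage_le (μ := μ) hρ hc)
    (one_le_smul_gramAverage hρ hc)
    (by rintro _ ⟨k, rfl⟩; exact star_mul_gramAverage_mul hρ k)
  exact ⟨v, hv, hv_inv, fun k => hv_conj _ ⟨k, rfl⟩⟩

open scoped Matrix.Norms.L2Operator

/-- A uniformly bounded subgroup of `GL(n, ℂ)` is simultaneously unitarizable, with a
similarity `v` whose condition number satisfies `‖v‖·‖v⁻¹‖ ≤ C²`. -/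
theorem bounded_subgroup_unitarizable (n : ℕ)
    (G : Subgroup (Matrix.GeneralLinearGroup (Fin n) ℂ)) (C : ℝ)
    (hbd : ∀ g ∈ G, ‖(g : Matrix (Fin n) (Fin n) ℂ)‖ ≤ C) :
    ∃ v : Matrix (Fin n) (Fin n) ℂ, IsUnit v ∧ ‖v‖ * ‖v⁻¹‖ ≤ C ^ 2 ∧
      ∀ g ∈ G, v * (g : Matrix (Fin n) (Fin n) ℂ) * v⁻¹ ∈ Matrix.unitaryGroup (Fin n) ℂ := by
  let B : Set (GL (Fin n) ℂ) :=
    {u | ‖(u : Matrix (Fin n) (Fin n) ℂ)‖ ≤ C ∧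
      ‖(↑u⁻¹ : Matrix (Fin n) (Fin n) ℂ)‖ ≤ C}
  have hB : IsCompact B := Units.isCompact_setOf_norm_le C
  have hK : (G.topologicalClosure : Set (GL (Fin n) ℂ)) ⊆ B := by
    rw [Subgroup.topologicalClosure_coe]
    exact closure_minimal (fun g hg => ⟨hbd g hg, hbd g⁻¹ (G.inv_mem hg)⟩) hB.isClosed
  have : CompactSpace G.topologicalClosure :=
    isCompact_iff_compactSpace.mp (hB.of_isClosed_subset G.isClosed_topologicalClosure hK)
  obtain ⟨v, hv, hv_inv, hv_conj⟩ :=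
    G.topologicalClosure.subtype.exists_conj_mem_unitary_of_compactSpace
      continuous_subtype_val fun k => (hK k.2).1
  refine ⟨v, v.isUnit, ?_, fun g hg => ?_⟩
  · rw [← Matrix.coe_units_inv, sq]
    exact mul_le_mul hv hv_inv (norm_nonneg _) ((norm_nonneg _).trans hv)
  · rw [← Matrix.coe_units_inv]
    exact hv_conj ⟨g, G.le_topologicalClosure hg⟩
end

section
/- Let A be a unital C*-algebra, θ a *-automorphism of A, and a ∈ A a cocycle, meaning |||a||| := sup_{n≥1} ‖Σ_{k=0}^{n-1} θᵏ(a)‖ < ∞. Then a is approximately inner: for every ε > 0 there exists x ∈ A with ‖x‖ ≤ |||a||| and ‖a − (x − θ(x))‖ < ε. -/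
/-!
With `aₙ = Σ_{k<n} θᵏ a` one has `a_{n+1} = a + θ aₙ`, so `aₘ - θ aₘ = a + aₘ - a_{m+1}` telescopes:
the Cesàro mean `xₙ = n⁻¹ Σ_{m=1}^{n} aₘ` satisfies `a - (xₙ - θ xₙ) = n⁻¹ (a_{n+1} - a)`.
Hence `‖xₙ‖ ≤ M` and `‖a - (xₙ - θ xₙ)‖ ≤ 2M/n`, which is small for large `n`.
-/

open Finset

namespace Cocycle

variable {𝕜 E : Type*} [RCLike 𝕜] [NormedAddCommGroup E] [NormedSpace 𝕜 E]
  (θ : E →ₗ[𝕜] E) (a : E)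

def partialSum (n : ℕ) : E := ∑ k ∈ range n, θ^[k] a

def cesaroMean (n : ℕ) : E := (n : 𝕜)⁻¹ • ∑ m ∈ range n, partialSum θ a (m + 1)

@[simp]
lemma partialSum_one : partialSum θ a 1 = a := by
  simp [partialSum]

lemma partialSum_succ (n : ℕ) : partialSum θ a (n + 1) = a + θ (partialSum θ a n) := by
  simp only [partialSum, sum_range_succ', Function.iterate_zero_apply, map_sum,
    Function.iterate_succ_apply']
  exact add_comm _ _

lemma sum_partialSum_sub_map (n : ℕ) :
    ∑ m ∈ range n, partialSum θ a (m + 1) - θ (∑ m ∈ range n, partialSum θ a (m + 1)) =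
      n • a + a - partialSum θ a (n + 1) := by
  have step (m : ℕ) : partialSum θ a (m + 1) - θ (partialSum θ a (m + 1)) =
      a + (partialSum θ a (m + 1) - partialSum θ a (m + 2)) := by
    rw [partialSum_succ θ a (m + 1)]; abel
  rw [map_sum, ← sum_sub_distrib, sum_congr rfl fun m _ => step m, sum_add_distrib,
    sum_range_sub' (fun m => partialSum θ a (m + 1)), partialSum_one, sum_const, card_range]
  abel

lemma sub_sub_map_cesaroMean {n : ℕ} (hn : n ≠ 0) :
    a - (cesaroMean θ a n - θ (cesaroMean θ a n)) =
      (n : 𝕜)⁻¹ • (partialSum θ a (n + 1) - a) := by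
  have hn' : (n : 𝕜) ≠ 0 := Nat.cast_ne_zero.mpr hn
  rw [cesaroMean, map_smul, ← smul_sub, sum_partialSum_sub_map, ← Nat.cast_smul_eq_nsmul 𝕜,
    add_sub_assoc, smul_add, smul_smul, inv_mul_cancel₀ hn', one_smul, smul_sub, smul_sub]
  abel

variable {θ a} {M : ℝ}

lemma norm_cesaroMean_le (hM : ∀ m, ‖partialSum θ a (m + 1)‖ ≤ M) (n : ℕ) :
    ‖cesaroMean θ a n‖ ≤ M := by
  have hM₀ : 0 ≤ M := (norm_nonneg _).trans (hM 0)
  rcases Nat.eq_zero_or_pos n with rfl | hn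
  · simpa [cesaroMean] using hM₀
  have hn' : (0 : ℝ) < n := Nat.cast_pos.mpr hn
  calc ‖cesaroMean θ a n‖
      = (n : ℝ)⁻¹ * ‖∑ m ∈ range n, partialSum θ a (m + 1)‖ := by
        rw [cesaroMean, norm_smul, norm_inv, RCLike.norm_natCast]
    _ ≤ (n : ℝ)⁻¹ * (n * M) := by
        gcongr
        simpa using norm_sum_le_of_le (range n) fun m _ => hM m
    _ = M := by field_simp

lemma norm_sub_sub_map_cesaroMean_le (hM : ∀ m, ‖partialSum θ a (m + 1)‖ ≤ M) {n : ℕ}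
    (hn : n ≠ 0) : ‖a - (cesaroMean θ a n - θ (cesaroMean θ a n))‖ ≤ 2 * M / n := by
  have hdiff : ‖partialSum θ a (n + 1) - a‖ ≤ 2 * M := by
    have ha : ‖a‖ ≤ M := by simpa using hM 0
    linarith [norm_sub_le (partialSum θ a (n + 1)) a, hM n]
  rw [sub_sub_map_cesaroMean θ a (𝕜 := 𝕜) hn, norm_smul, norm_inv, RCLike.norm_natCast,
    inv_mul_eq_div]
  gcongr

end Cocycle

/-- Every cocycle for a *-automorphism `θ` of a unital C*-algebra is approximately inner:
if `M` is the supremum of the norms of the partial sums `Σ_{k<n} θᵏ(a)` (`n ≥ 1`), then for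
every `ε > 0` there is `x` with `‖x‖ ≤ M` and `‖a - (x - θ x)‖ < ε`. -/
theorem cocycle_approximately_inner {A : Type*} [CStarAlgebra A]
    (θ : A ≃⋆ₐ[ℂ] A) (a : A) (M : ℝ)
    (hM : IsLUB {r : ℝ | ∃ n : ℕ, 1 ≤ n ∧ r = ‖∑ k ∈ Finset.range n, (⇑θ)^[k] a‖} M) :
    ∀ ε > (0 : ℝ), ∃ x : A, ‖x‖ ≤ M ∧ ‖a - (x - θ x)‖ < ε := by
  intro ε hε
  let θₗ : A →ₗ[ℂ] A := θ.toAlgEquiv.toLinearMap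
  have hbound (m : ℕ) : ‖Cocycle.partialSum θₗ a (m + 1)‖ ≤ M :=
    hM.1 ⟨m + 1, Nat.le_add_left 1 m, rfl⟩
  obtain ⟨n, hn⟩ := exists_nat_gt (2 * M / ε)
  have hn₀ : (0 : ℝ) < n + 1 := by positivity
  refine ⟨Cocycle.cesaroMean θₗ a (n + 1), Cocycle.norm_cesaroMean_le hbound _, ?_⟩
  calc _ ≤ 2 * M / (n + 1 : ℕ) := Cocycle.norm_sub_sub_map_cesaroMean_le hbound n.succ_ne_zero
    _ < ε := by
      push_cast
      rw [div_lt_iff₀ hn₀]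
      rw [div_lt_iff₀ hε] at hn
      linarith
end

section
/- Let A be a unital C*-algebra, u ∈ A unitary, a ∈ A a cocycle for θ = Ad_u, and π_a : ℤ → M₂(A) the uniformly bounded representation n ↦ tⁿ where t = [[u, au],[0,u]]. Then π_a is unitarizable (i.e., there is an invertible w ∈ M₂(A) with w t w⁻¹ unitary) if and only if a is inner, i.e., a = x − θ(x) for some x ∈ A. -/
/-!
If `w t w⁻¹` is unitary, then `h = w⋆ w` is a `t`-invariant form: `t⋆ h t = h`. Its first row
gives that `h₀₀` commutes with `u` and that `h₀₀ a = θ(h₀₁) - h₀₁` for `θ = Ad_u`. As `w` is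
invertible, `h₀₀` is invertible, so `a = x - θ(x)` with `x = -h₀₀⁻¹ h₀₁`. Conversely, if
`a = x - θ(x)`, conjugating `t` by `[[1, -x], [0, 1]]` gives the unitary `diag(u, u)`.
-/

open scoped InnerProductSpace WithCStarModule

/-- Cauchy–Schwarz in the Hilbert `A`-module `C⋆ᵐᵒᵈ(A, ι → A)` gives `1 ≤ ‖v‖² ∑ y_i⋆ y_i`. -/
theorem CStarAlgebra.isUnit_sum_star_mul_self_of_sum_star_mul_eq_one {A ι : Type*}
    [CStarAlgebra A] [Fintype ι] {y v : ι → A} (h : ∑ i, star (v i) * y i = 1) :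
    IsUnit (∑ i, star (y i) * y i) := by
  let _ := CStarAlgebra.spectralOrder A
  let _ := CStarAlgebra.spectralOrderedRing A
  let Y : C⋆ᵐᵒᵈ(A, ι → A) := (WithCStarModule.equiv A _).symm (star y)
  let V : C⋆ᵐᵒᵈ(A, ι → A) := (WithCStarModule.equiv A _).symm (star v)
  have hVY : ⟪V, Y⟫_A = 1 := by
    rw [← star_one, ← h, WithCStarModule.pi_inner]
    simp [V, Y, WithCStarModule.inner_def, star_sum]
  have hYV : ⟪Y, V⟫_A = 1 := by rw [← CStarModule.star_inner, hVY, star_one]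
  have hYY : ⟪Y, Y⟫_A = ∑ i, star (y i) * y i := by
    simp [Y, WithCStarModule.pi_inner, WithCStarModule.inner_def]
  have cauchy_schwarz : 1 ≤ ‖V‖ ^ 2 • ⟪Y, Y⟫_A := by
    simpa [hVY, hYV] using CStarModule.inner_mul_inner_swap_le (A := A) (x := V) (y := Y)
  have hunit : IsUnit (algebraMap ℝ A (‖V‖ ^ 2) * ⟪Y, Y⟫_A) := by
    rw [← Algebra.smul_def]
    exact CStarAlgebra.isUnit_of_le 1 cauchy_schwarz
  rw [← hYY]
  exact ((Algebra.commute_algebraMap_left _ _).isUnit_mul_iff.mp hunit).2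

theorem Matrix.isUnit_star_mul_self_apply_self {A n : Type*} [CStarAlgebra A] [Fintype n]
    [DecidableEq n] {w : Matrix n n A} (hw : IsUnit w) (i : n) :
    IsUnit ((star w * w) i i) := by
  obtain ⟨W, rfl⟩ := hw
  have hinv := congrFun (congrFun W.inv_mul i) i
  rw [Matrix.mul_apply, Matrix.one_apply_eq] at hinv
  simpa [Matrix.mul_apply, Matrix.star_apply] using
    CStarAlgebra.isUnit_sum_star_mul_self_of_sum_star_mul_eq_one
      (y := fun k => (W : Matrix n n A) k i) (v := fun k => star ((↑W⁻¹ : Matrix n n A) i k))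
      (by simpa using hinv)

theorem Matrix.diagonal_mem_unitary {R n : Type*} [Semiring R] [StarRing R] [Fintype n]
    [DecidableEq n] {d : n → R} (hd : ∀ i, d i ∈ unitary R) :
    Matrix.diagonal d ∈ unitary (Matrix n n R) := by
  rw [Unitary.mem_iff, Matrix.star_eq_conjTranspose, Matrix.diagonal_conjTranspose,
    Matrix.diagonal_mul_diagonal, Matrix.diagonal_mul_diagonal, ← Matrix.diagonal_one]
  exact ⟨congrArg _ (funext fun i => Unitary.star_mul_self_of_mem (hd i)),
    congrArg _ (funext fun i => Unitary.mul_star_self_of_mem (hd i))⟩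

theorem star_mul_star_mul_self_mul_eq_of_conj_mem_unitary {R : Type*} [Monoid R] [StarMul R]
    (w : Rˣ) {t : R} (h : (w : R) * t * ↑w⁻¹ ∈ unitary R) :
    star t * (star (w : R) * w) * t = star (w : R) * w := by
  have hstar : star (w : R) * star (↑w⁻¹ : R) = 1 := by
    rw [← star_mul, w.inv_mul, star_one]
  calc star t * (star (w : R) * w) * t
      = star (w : R) * star (↑w⁻¹ : R) * (star t * (star (w : R) * w) * t) * (↑w⁻¹ * w) := by
        rw [hstar, w.inv_mul, one_mul, mul_one]
    _ = star (w : R) * (star ((w : R) * t * ↑w⁻¹) * ((w : R) * t * ↑w⁻¹)) * w := by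
        simp only [star_mul, mul_assoc]
    _ = star (w : R) * w := by rw [Unitary.star_mul_self_of_mem h, mul_one]

section Ring

variable {R : Type*} [Ring R] [StarRing R] {u a : R}

theorem exists_eq_sub_conj_of_invariant_form (hu : u ∈ unitary R)
    {h : Matrix (Fin 2) (Fin 2) R}
    (hinv : star !![u, a * u; 0, u] * h * !![u, a * u; 0, u] = h) (hunit : IsUnit (h 0 0)) :
    ∃ x, a = x - u * x * star u := by
  have e00 : star u * h 0 0 * u = h 0 0 := by
    simpa [Matrix.mul_apply, Matrix.star_apply, mul_assoc] using congrFun (congrFun hinv 0) 0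
  have e01 : star u * (h 0 0 * a + h 0 1) * u = h 0 1 := by
    simpa [Matrix.mul_apply, Matrix.star_apply, mul_add, add_mul, mul_assoc] using
      congrFun (congrFun hinv 0) 1
  have hcomm : Commute (h 0 0) u :=
    calc h 0 0 * u = u * (star u * h 0 0 * u) := by
          rw [← mul_assoc, ← mul_assoc, Unitary.mul_star_self_of_mem hu, one_mul]
      _ = u * h 0 0 := by rw [e00]
  have hcob : h 0 0 * a = u * h 0 1 * star u - h 0 1 := by
    refine eq_sub_of_add_eq ?_
    calc h 0 0 * a + h 0 1 = u * (star u * (h 0 0 * a + h 0 1) * u) * star u := by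
          simp only [← mul_assoc, Unitary.mul_star_self_of_mem hu, one_mul]
          simp only [mul_assoc, Unitary.mul_star_self_of_mem hu, mul_one]
      _ = u * h 0 1 * star u := by rw [e01]
  obtain ⟨c, hc⟩ := hunit
  have hcomm' : Commute (↑c⁻¹ : R) u := by rw [← hc] at hcomm; exact hcomm.units_inv_left
  refine ⟨-(↑c⁻¹ * h 0 1), ?_⟩
  calc a = ↑c⁻¹ * (h 0 0 * a) := by rw [← hc, ← mul_assoc, c.inv_mul, one_mul]
    _ = -(↑c⁻¹ * h 0 1) - u * -(↑c⁻¹ * h 0 1) * star u := by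
      rw [hcob, mul_sub, ← mul_assoc, ← mul_assoc, hcomm'.eq]
      noncomm_ring

theorem unitarizable_of_eq_sub_conj {x : R} (hu : u ∈ unitary R) (ha : a = x - u * x * star u) :
    ∃ w : Matrix (Fin 2) (Fin 2) R, IsUnit w ∧
      w * !![u, a * u; 0, u] * Ring.inverse w ∈ unitary (Matrix (Fin 2) (Fin 2) R) := by
  let w : (Matrix (Fin 2) (Fin 2) R)ˣ :=
    ⟨!![1, -x; 0, 1], !![1, x; 0, 1], by simp [Matrix.one_fin_two], by simp [Matrix.one_fin_two]⟩
  have hau : a * u = x * u - u * x := by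
    rw [ha, sub_mul, mul_assoc, mul_assoc, Unitary.star_mul_self_of_mem hu, mul_one]
  have hdiag : (w : Matrix (Fin 2) (Fin 2) R) * !![u, a * u; 0, u] *
      (↑w⁻¹ : Matrix (Fin 2) (Fin 2) R) = Matrix.diagonal ![u, u] := by
    simp [w, Matrix.diagonal_fin_two, hau]
    abel
  refine ⟨(w : Matrix (Fin 2) (Fin 2) R), w.isUnit, ?_⟩
  rw [Ring.inverse_unit, hdiag]
  exact Matrix.diagonal_mem_unitary fun i => by fin_cases i <;> exact hu

end Ring

theorem exists_eq_sub_conj_of_unitarizable {A : Type*} [CStarAlgebra A] {u a : A}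
    (hu : u ∈ unitary A)
    (h : ∃ w : Matrix (Fin 2) (Fin 2) A, IsUnit w ∧
      w * !![u, a * u; 0, u] * Ring.inverse w ∈ unitary (Matrix (Fin 2) (Fin 2) A)) :
    ∃ x, a = x - u * x * star u := by
  obtain ⟨w, ⟨W, rfl⟩, hW⟩ := h
  rw [Ring.inverse_unit] at hW
  exact exists_eq_sub_conj_of_invariant_form hu
    (star_mul_star_mul_self_mul_eq_of_conj_mem_unitary W hW)
    (Matrix.isUnit_star_mul_self_apply_self W.isUnit 0)

theorem cocycle_rep_unitarizable_iff_inner_general {A : Type*} [CStarAlgebra A]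
    (u : A) (hu : u ∈ unitary A) (a : A) :
    (∃ w : Matrix (Fin 2) (Fin 2) A, IsUnit w ∧
        w * !![u, a * u; 0, u] * Ring.inverse w ∈ unitary (Matrix (Fin 2) (Fin 2) A)) ↔
      ∃ x : A, a = x - u * x * star u :=
  ⟨exists_eq_sub_conj_of_unitarizable hu, fun ⟨_, hx⟩ => unitarizable_of_eq_sub_conj hu hx⟩

/-- The uniformly bounded representation `n ↦ tⁿ` of `ℤ` into `M₂(A)` associated to a
cocycle `a` for `Ad_u` (where `t = [[u, au],[0,u]]`) is unitarizable if and only if `a` is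
inner, i.e. `a = x - u x u⁻¹` for some `x ∈ A`. -/
theorem cocycle_rep_unitarizable_iff_inner {A : Type*} [CStarAlgebra A]
    (u : A) (hu : u ∈ unitary A) (a : A) (M : ℝ)
    (hM : ∀ n : ℕ, ‖∑ k ∈ Finset.range n, (fun x => u * x * star u)^[k] a‖ ≤ M) :
    (∃ w : Matrix (Fin 2) (Fin 2) A, IsUnit w ∧
        w * !![u, a * u; 0, u] * Ring.inverse w ∈ unitary (Matrix (Fin 2) (Fin 2) A)) ↔
      ∃ x : A, a = x - u * x * star u :=
  cocycle_rep_unitarizable_iff_inner_general u hu a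
end
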